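/- arXiv:2006.10599 — 4 statements merged into one kernel-verified Lean document; each statement's English description precedes it below -/
import Mathlib

section
/- Let (X, μ) be a measure space, let p, q : X → ℝ be measurable functions with p(x) > 0 and q(x) > 0 for μ-almost every x, and suppose the functions x ↦ p(x)·log(p(x)/q(x)) and x ↦ q(x)·log(q(x)/p(x)) are μ-integrable. Then for every α ∈ [0,1], the skew-geometric Jensen–Shannon expression with reversed geometric mean satisfies the quadratic identity: (1−α)·∫ p(x)·log( p(x) / (p(x)^α · q(x)^(1−α)) ) dμ + α·∫ q(x)·log( q(x) / (p(x)^α · q(x)^(1−α)) ) dμ = (1−α)²·∫ p(x)·log(p(x)/q(x)) dμ + α²·∫ q(x)·log(q(x)/p(x)) dμ. -/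
/-!
Pointwise, `log (p / (p^α q^(1-α))) = (1-α) log (p/q)` and `log (q / (p^α q^(1-α))) = α log (q/p)`
wherever `p, q > 0`; integrating these against `p` and `q` turns each skew term into a multiple of
the corresponding KL divergence.
-/

open MeasureTheory Filter Set

namespace Real

theorem log_div_rpow_mul_rpow {a b : ℝ} (ha : 0 < a) (hb : 0 < b) (α : ℝ) :
    log (a / (a ^ α * b ^ (1 - α))) = (1 - α) * log (a / b) := by
  rw [log_div ha.ne' (by positivity), log_mul (by positivity) (by positivity),
    log_rpow ha, log_rpow hb, log_div ha.ne' hb.ne']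
  ring

end Real

theorem integral_mul_log_div_rpow_mul_rpow {X : Type*} [MeasurableSpace X] {μ : Measure X}
    {p q : X → ℝ} (hp0 : ∀ᵐ x ∂μ, 0 < p x) (hq0 : ∀ᵐ x ∂μ, 0 < q x) (α : ℝ) :
    ∫ x, p x * Real.log (p x / (p x ^ α * q x ^ (1 - α))) ∂μ
      = (1 - α) * ∫ x, p x * Real.log (p x / q x) ∂μ := by
  rw [← integral_const_mul]
  refine integral_congr_ae ?_
  filter_upwards [hp0, hq0] with x hpx hqx
  rw [Real.log_div_rpow_mul_rpow hpx hqx]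
  ring

theorem jsg_alpha_prime_quadratic_identity_general
    {X : Type*} [MeasurableSpace X] (μ : Measure X)
    (p q : X → ℝ)
    (hp0 : ∀ᵐ x ∂μ, 0 < p x) (hq0 : ∀ᵐ x ∂μ, 0 < q x) :
    ∀ α ∈ Set.Icc (0 : ℝ) 1,
      (1 - α) * ∫ x, p x * Real.log (p x / (p x ^ α * q x ^ (1 - α))) ∂μ
        + α * ∫ x, q x * Real.log (q x / (p x ^ α * q x ^ (1 - α))) ∂μ
      = (1 - α) ^ 2 * ∫ x, p x * Real.log (p x / q x) ∂μ
        + α ^ 2 * ∫ x, q x * Real.log (q x / p x) ∂μ := by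
  intro α _
  have hq_term : ∫ x, q x * Real.log (q x / (p x ^ α * q x ^ (1 - α))) ∂μ
      = α * ∫ x, q x * Real.log (q x / p x) ∂μ := by
    simpa only [sub_sub_cancel, mul_comm (p _ ^ α)] using
      integral_mul_log_div_rpow_mul_rpow hq0 hp0 (1 - α)
  rw [integral_mul_log_div_rpow_mul_rpow hp0 hq0, hq_term]
  ring

theorem jsg_alpha_prime_quadratic_identity
    {X : Type*} [MeasurableSpace X] (μ : Measure X)
    (p q : X → ℝ) (hp : Measurable p) (hq : Measurable q)
    (hp0 : ∀ᵐ x ∂μ, 0 < p x) (hq0 : ∀ᵐ x ∂μ, 0 < q x)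
    (hpq : Integrable (fun x => p x * Real.log (p x / q x)) μ)
    (hqp : Integrable (fun x => q x * Real.log (q x / p x)) μ) :
    ∀ α ∈ Set.Icc (0 : ℝ) 1,
      (1 - α) * ∫ x, p x * Real.log (p x / (p x ^ α * q x ^ (1 - α))) ∂μ
        + α * ∫ x, q x * Real.log (q x / (p x ^ α * q x ^ (1 - α))) ∂μ
      = (1 - α) ^ 2 * ∫ x, p x * Real.log (p x / q x) ∂μ
        + α ^ 2 * ∫ x, q x * Real.log (q x / p x) ∂μ :=
  jsg_alpha_prime_quadratic_identity_general μ p q hp0 hq0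
end

section
/- Let (X, μ) be a measure space, let p, q : X → ℝ be measurable functions with p(x) > 0 and q(x) > 0 for μ-almost every x, and suppose x ↦ p(x)·log(p(x)/q(x)) and x ↦ q(x)·log(q(x)/p(x)) are μ-integrable. Then the function α ↦ (1−α)·∫ p·log( p / (p^α · q^(1−α)) ) dμ + α·∫ q·log( q / (p^α · q^(1−α)) ) dμ tends to ∫ q·log(q/p) dμ = KL(q ∥ p) as α → 1 within (0,1). -/
/-!
Pointwise, wherever `p, q > 0`, the logarithms of the ratios to the geometric mean are
`log (p / (p ^ α * q ^ (1 - α))) = (1 - α) * log (p / q)` and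
`log (q / (p ^ α * q ^ (1 - α))) = α * log (q / p)`. Hence the skew-geometric Jensen–Shannon
divergence is the quadratic polynomial `(1 - α) ^ 2 * KL(p ∥ q) + α ^ 2 * KL(q ∥ p)` in `α`,
whose value at `α = 1` is `KL(q ∥ p)`.
-/

open MeasureTheory Filter Set Topology

namespace Real

variable {a b : ℝ}

theorem log_div_rpow_mul_rpow_one_sub_left (ha : 0 < a) (hb : 0 < b) (α : ℝ) :
    log (a / (a ^ α * b ^ (1 - α))) = (1 - α) * log (a / b) := by
  rw [log_div ha.ne' (by positivity), log_mul (by positivity) (by positivity), log_rpow ha,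
    log_rpow hb, log_div ha.ne' hb.ne']
  ring

theorem log_div_rpow_mul_rpow_one_sub_right (ha : 0 < a) (hb : 0 < b) (α : ℝ) :
    log (b / (a ^ α * b ^ (1 - α))) = α * log (b / a) := by
  rw [log_div hb.ne' (by positivity), log_mul (by positivity) (by positivity), log_rpow ha,
    log_rpow hb, log_div hb.ne' ha.ne']
  ring

end Real

section GeometricMean

variable {X : Type*} [MeasurableSpace X] {μ : Measure X} {p q : X → ℝ}

theorem integral_mul_log_div_geomMean_left (hp0 : ∀ᵐ x ∂μ, 0 < p x) (hq0 : ∀ᵐ x ∂μ, 0 < q x)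
    (α : ℝ) :
    ∫ x, p x * Real.log (p x / (p x ^ α * q x ^ (1 - α))) ∂μ
      = (1 - α) * ∫ x, p x * Real.log (p x / q x) ∂μ := by
  rw [← integral_const_mul]
  refine integral_congr_ae ?_
  filter_upwards [hp0, hq0] with x hpx hqx
  rw [Real.log_div_rpow_mul_rpow_one_sub_left hpx hqx]
  ring

theorem integral_mul_log_div_geomMean_right (hp0 : ∀ᵐ x ∂μ, 0 < p x) (hq0 : ∀ᵐ x ∂μ, 0 < q x)
    (α : ℝ) :
    ∫ x, q x * Real.log (q x / (p x ^ α * q x ^ (1 - α))) ∂μ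
      = α * ∫ x, q x * Real.log (q x / p x) ∂μ := by
  rw [← integral_const_mul]
  refine integral_congr_ae ?_
  filter_upwards [hp0, hq0] with x hpx hqx
  rw [Real.log_div_rpow_mul_rpow_one_sub_right hpx hqx]
  ring

end GeometricMean

theorem jsg_alpha_prime_tendsto_reverse_KL_general
    {X : Type*} [MeasurableSpace X] (μ : Measure X)
    (p q : X → ℝ)
    (hp0 : ∀ᵐ x ∂μ, 0 < p x) (hq0 : ∀ᵐ x ∂μ, 0 < q x) :
    Tendsto (fun α : ℝ =>
        (1 - α) * ∫ x, p x * Real.log (p x / (p x ^ α * q x ^ (1 - α))) ∂μ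
          + α * ∫ x, q x * Real.log (q x / (p x ^ α * q x ^ (1 - α))) ∂μ)
      (𝓝[Set.Ioo (0 : ℝ) 1] 1)
      (𝓝 (∫ x, q x * Real.log (q x / p x) ∂μ)) := by
  set KLpq := ∫ x, p x * Real.log (p x / q x) ∂μ
  set KLqp := ∫ x, q x * Real.log (q x / p x) ∂μ
  simp only [integral_mul_log_div_geomMean_left hp0 hq0,
    integral_mul_log_div_geomMean_right hp0 hq0]
  have hquadratic : Tendsto (fun α : ℝ => (1 - α) * ((1 - α) * KLpq) + α * (α * KLqp)) (𝓝 1)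
      (𝓝 ((1 - 1) * ((1 - 1) * KLpq) + 1 * (1 * KLqp))) :=
    (by fun_prop : Continuous _).tendsto 1
  simpa using tendsto_nhdsWithin_of_tendsto_nhds hquadratic

theorem jsg_alpha_prime_tendsto_reverse_KL
    {X : Type*} [MeasurableSpace X] (μ : Measure X)
    (p q : X → ℝ) (hp : Measurable p) (hq : Measurable q)
    (hp0 : ∀ᵐ x ∂μ, 0 < p x) (hq0 : ∀ᵐ x ∂μ, 0 < q x)
    (hpq : Integrable (fun x => p x * Real.log (p x / q x)) μ)
    (hqp : Integrable (fun x => q x * Real.log (q x / p x)) μ) :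
    Tendsto (fun α : ℝ =>
        (1 - α) * ∫ x, p x * Real.log (p x / (p x ^ α * q x ^ (1 - α))) ∂μ
          + α * ∫ x, q x * Real.log (q x / (p x ^ α * q x ^ (1 - α))) ∂μ)
      (𝓝[Set.Ioo (0 : ℝ) 1] 1)
      (𝓝 (∫ x, q x * Real.log (q x / p x) ∂μ)) :=
  jsg_alpha_prime_tendsto_reverse_KL_general μ p q hp0 hq0
end

section
/- Let (X, μ) be a measure space, let p, q : X → ℝ be measurable functions with p(x) > 0 and q(x) > 0 for μ-almost every x, and suppose the function x ↦ (p(x) + q(x))·|log(p(x)/q(x))| is μ-integrable. Then the function α ↦ (1−α)·∫ p^α·q^(1−α)·log( (p^α·q^(1−α))/p ) dμ + α·∫ p^α·q^(1−α)·log( (p^α·q^(1−α))/q ) dμ tends to ∫ q·log(q/p) dμ = KL(q ∥ p) as α → 0 within (0,1). -/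
/-!
Writing `G_α = p^α q^(1-α)` and `L = log (p / q)`, one has `log (G_α / p) = (α - 1) L` and
`log (G_α / q) = α L`, so the dual skew-geometric Jensen–Shannon divergence collapses to
`(2α - 1) ∫ G_α L`. Since `G_α ≤ p + q` for `α ∈ [0, 1]`, dominated convergence gives
`∫ G_α L → ∫ q L` as `α → 0`, and `-∫ q L = KL(q ∥ p)`.
-/

open MeasureTheory Filter Set Topology

namespace Real

variable {a b : ℝ}

theorem log_rpow_mul_rpow_one_sub_div_left (ha : 0 < a) (hb : 0 < b) (α : ℝ) :
    log (a ^ α * b ^ (1 - α) / a) = (α - 1) * log (a / b) := by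
  rw [log_div (by positivity) ha.ne', log_mul (by positivity) (by positivity), log_rpow ha,
    log_rpow hb, log_div ha.ne' hb.ne']
  ring

theorem log_rpow_mul_rpow_one_sub_div_right (ha : 0 < a) (hb : 0 < b) (α : ℝ) :
    log (a ^ α * b ^ (1 - α) / b) = α * log (a / b) := by
  rw [log_div (by positivity) hb.ne', log_mul (by positivity) (by positivity), log_rpow ha,
    log_rpow hb, log_div ha.ne' hb.ne']
  ring

theorem rpow_mul_rpow_one_sub_le_add (ha : 0 ≤ a) (hb : 0 ≤ b) {α : ℝ}
    (hα : α ∈ Icc (0 : ℝ) 1) :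
    a ^ α * b ^ (1 - α) ≤ a + b :=
  calc a ^ α * b ^ (1 - α) ≤ α * a + (1 - α) * b :=
        geom_mean_le_arith_mean2_weighted hα.1 (sub_nonneg.2 hα.2) ha hb (by ring)
    _ ≤ a + b := by nlinarith [hα.1, hα.2]

theorem tendsto_rpow_mul_rpow_one_sub_nhds_zero (ha : a ≠ 0) :
    Tendsto (fun α : ℝ => a ^ α * b ^ (1 - α)) (𝓝 0) (𝓝 b) := by
  have hcont : ContinuousAt (fun α : ℝ => a ^ α * b ^ (1 - α)) 0 :=
    (continuousAt_const_rpow ha).mul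
      (continuousAt_const.rpow (by fun_prop) (Or.inr (by norm_num)))
  simpa using hcont.tendsto

end Real

section

variable {X : Type*} [MeasurableSpace X] {μ : Measure X} {p q : X → ℝ}

theorem tendsto_integral_rpow_mul_rpow_one_sub_mul {f : X → ℝ}
    (hp : AEMeasurable p μ) (hq : AEMeasurable q μ) (hf : AEStronglyMeasurable f μ)
    (hp0 : ∀ᵐ x ∂μ, 0 < p x) (hq0 : ∀ᵐ x ∂μ, 0 ≤ q x)
    (hbound : Integrable (fun x => (p x + q x) * |f x|) μ) :
    Tendsto (fun α : ℝ => ∫ x, p x ^ α * q x ^ (1 - α) * f x ∂μ) (𝓝[Icc 0 1] 0)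
      (𝓝 (∫ x, q x * f x ∂μ)) := by
  refine tendsto_integral_filter_of_dominated_convergence _ ?_ ?_ hbound ?_
  · exact Eventually.of_forall fun α =>
      ((hp.pow_const α).mul (hq.pow_const (1 - α))).aestronglyMeasurable.mul hf
  · filter_upwards [self_mem_nhdsWithin] with α hα
    filter_upwards [hp0, hq0] with x hpx hqx
    rw [Real.norm_eq_abs, abs_mul, abs_of_nonneg (by positivity)]
    exact mul_le_mul_of_nonneg_right (Real.rpow_mul_rpow_one_sub_le_add hpx.le hqx hα)
      (abs_nonneg _)
  · filter_upwards [hp0] with x hpx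
    exact ((Real.tendsto_rpow_mul_rpow_one_sub_nhds_zero hpx.ne').mul_const (f x)).mono_left
      nhdsWithin_le_nhds

theorem dual_skew_geometric_js_eq (hp0 : ∀ᵐ x ∂μ, 0 < p x) (hq0 : ∀ᵐ x ∂μ, 0 < q x)
    (α : ℝ) :
    (1 - α) * ∫ x, p x ^ α * q x ^ (1 - α) * Real.log ((p x ^ α * q x ^ (1 - α)) / p x) ∂μ
        + α * ∫ x, p x ^ α * q x ^ (1 - α) * Real.log ((p x ^ α * q x ^ (1 - α)) / q x) ∂μ
      = (2 * α - 1) * ∫ x, p x ^ α * q x ^ (1 - α) * Real.log (p x / q x) ∂μ := by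
  have hleft : ∫ x, p x ^ α * q x ^ (1 - α) * Real.log ((p x ^ α * q x ^ (1 - α)) / p x) ∂μ
      = (α - 1) * ∫ x, p x ^ α * q x ^ (1 - α) * Real.log (p x / q x) ∂μ := by
    rw [← integral_const_mul]
    refine integral_congr_ae ?_
    filter_upwards [hp0, hq0] with x hpx hqx
    rw [Real.log_rpow_mul_rpow_one_sub_div_left hpx hqx]
    ring
  have hright :
      ∫ x, p x ^ α * q x ^ (1 - α) * Real.log ((p x ^ α * q x ^ (1 - α)) / q x) ∂μ
      = α * ∫ x, p x ^ α * q x ^ (1 - α) * Real.log (p x / q x) ∂μ := by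
    rw [← integral_const_mul]
    refine integral_congr_ae ?_
    filter_upwards [hp0, hq0] with x hpx hqx
    rw [Real.log_rpow_mul_rpow_one_sub_div_right hpx hqx]
    ring
  rw [hleft, hright]
  ring

theorem integral_mul_log_div_rev :
    ∫ x, q x * Real.log (q x / p x) ∂μ = -∫ x, q x * Real.log (p x / q x) ∂μ := by
  rw [← integral_neg]
  simp_rw [← inv_div (p _), Real.log_inv, mul_neg]

end

theorem dual_jsg_alpha_prime_tendsto_reverse_KL
    {X : Type*} [MeasurableSpace X] (μ : Measure X)
    (p q : X → ℝ) (hp : Measurable p) (hq : Measurable q)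
    (hp0 : ∀ᵐ x ∂μ, 0 < p x) (hq0 : ∀ᵐ x ∂μ, 0 < q x)
    (hInt : Integrable (fun x => (p x + q x) * |Real.log (p x / q x)|) μ) :
    Tendsto (fun α : ℝ =>
        (1 - α) * ∫ x, p x ^ α * q x ^ (1 - α) *
            Real.log ((p x ^ α * q x ^ (1 - α)) / p x) ∂μ
          + α * ∫ x, p x ^ α * q x ^ (1 - α) *
            Real.log ((p x ^ α * q x ^ (1 - α)) / q x) ∂μ)
      (𝓝[Set.Ioo (0 : ℝ) 1] 0)
      (𝓝 (∫ x, q x * Real.log (q x / p x) ∂μ)) := by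
  have hcoef : Tendsto (fun α : ℝ => 2 * α - 1) (𝓝[Ioo 0 1] 0) (𝓝 (-1)) :=
    tendsto_nhdsWithin_of_tendsto_nhds (Continuous.tendsto' (by fun_prop) 0 _ (by norm_num))
  have hintegral := (tendsto_integral_rpow_mul_rpow_one_sub_mul hp.aemeasurable hq.aemeasurable
    (hp.div hq).log.aestronglyMeasurable hp0 (hq0.mono fun _ h => h.le) hInt).mono_left
    (nhdsWithin_mono _ Ioo_subset_Icc_self)
  rw [integral_mul_log_div_rev, ← neg_one_mul]
  simpa only [dual_skew_geometric_js_eq hp0 hq0, Pi.div_apply] using hcoef.mul hintegral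
end

section
/- Let (X, μ) be a measure space, let p, q : X → ℝ be measurable functions with p(x) > 0 and q(x) > 0 for μ-almost every x, and suppose x ↦ p(x)·log(p(x)/q(x)) and x ↦ q(x)·log(q(x)/p(x)) are μ-integrable. Then the function α ↦ (1−α)·∫ p·log( p / (p^(1−α)·q^α) ) dμ + α·∫ q·log( q / (p^(1−α)·q^α) ) dμ tends to 0 both as α → 0 within (0,1) and as α → 1 within (0,1). -/
/-!
Pointwise, `log (p / (p^(1-α) q^α)) = α log (p / q)` and `log (q / (p^(1-α) q^α)) = (1-α) log (q / p)`,
so the skew-geometric Jensen–Shannon divergence equals `α (1-α) (KL(p ∥ q) + KL(q ∥ p))`.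
This is a polynomial in `α` vanishing at `0` and `1`.
-/

open MeasureTheory Filter Set Topology

noncomputable section

variable {X : Type*}

def skewGeomMean (p q : X → ℝ) (α : ℝ) (x : X) : ℝ := p x ^ (1 - α) * q x ^ α

def skewGeomJS [MeasurableSpace X] (μ : Measure X) (p q : X → ℝ) (α : ℝ) : ℝ :=
  (1 - α) * ∫ x, p x * Real.log (p x / skewGeomMean p q α x) ∂μ
    + α * ∫ x, q x * Real.log (q x / skewGeomMean p q α x) ∂μ

lemma skewGeomMean_swap (p q : X → ℝ) (α : ℝ) :
    skewGeomMean q p (1 - α) = skewGeomMean p q α := by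
  ext x
  simp only [skewGeomMean, sub_sub_cancel, mul_comm]

lemma Real.log_div_rpow_mul_rpow_s7 {a b : ℝ} (ha : 0 < a) (hb : 0 < b) (α : ℝ) :
    Real.log (a / (a ^ (1 - α) * b ^ α)) = α * Real.log (a / b) := by
  rw [Real.log_div ha.ne' (by positivity), Real.log_mul (by positivity) (by positivity),
    Real.log_rpow ha, Real.log_rpow hb, Real.log_div ha.ne' hb.ne']
  ring

variable [MeasurableSpace X] {μ : Measure X} {p q : X → ℝ}

lemma integral_mul_log_div_skewGeomMean (hp : ∀ᵐ x ∂μ, 0 < p x) (hq : ∀ᵐ x ∂μ, 0 < q x)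
    (α : ℝ) :
    ∫ x, p x * Real.log (p x / skewGeomMean p q α x) ∂μ
      = α * ∫ x, p x * Real.log (p x / q x) ∂μ := by
  rw [← integral_const_mul]
  refine integral_congr_ae ?_
  filter_upwards [hp, hq] with x hpx hqx
  rw [skewGeomMean, Real.log_div_rpow_mul_rpow_s7 hpx hqx]
  ring

theorem skewGeomJS_eq (hp : ∀ᵐ x ∂μ, 0 < p x) (hq : ∀ᵐ x ∂μ, 0 < q x) (α : ℝ) :
    skewGeomJS μ p q α = α * (1 - α) *
      ((∫ x, p x * Real.log (p x / q x) ∂μ) + ∫ x, q x * Real.log (q x / p x) ∂μ) := by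
  rw [skewGeomJS, integral_mul_log_div_skewGeomMean hp hq, ← skewGeomMean_swap,
    integral_mul_log_div_skewGeomMean hq hp]
  ring

theorem continuous_skewGeomJS (hp : ∀ᵐ x ∂μ, 0 < p x) (hq : ∀ᵐ x ∂μ, 0 < q x) :
    Continuous (skewGeomJS μ p q) := by
  simp only [funext (skewGeomJS_eq hp hq)]
  fun_prop

end

theorem jsg_alpha_original_tendsto_zero_general
    {X : Type*} [MeasurableSpace X] (μ : Measure X)
    (p q : X → ℝ)
    (hp0 : ∀ᵐ x ∂μ, 0 < p x) (hq0 : ∀ᵐ x ∂μ, 0 < q x) :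
    Tendsto (fun α : ℝ =>
        (1 - α) * ∫ x, p x * Real.log (p x / (p x ^ (1 - α) * q x ^ α)) ∂μ
          + α * ∫ x, q x * Real.log (q x / (p x ^ (1 - α) * q x ^ α)) ∂μ)
      (𝓝[Set.Ioo (0 : ℝ) 1] 0) (𝓝 0) ∧
    Tendsto (fun α : ℝ =>
        (1 - α) * ∫ x, p x * Real.log (p x / (p x ^ (1 - α) * q x ^ α)) ∂μ
          + α * ∫ x, q x * Real.log (q x / (p x ^ (1 - α) * q x ^ α)) ∂μ)
      (𝓝[Set.Ioo (0 : ℝ) 1] 1) (𝓝 0) := by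
  have tendsto_of_root (α₀ : ℝ) (hα₀ : α₀ * (1 - α₀) = 0) :
      Tendsto (skewGeomJS μ p q) (𝓝[Ioo 0 1] α₀) (𝓝 0) := by
    have h := (continuous_skewGeomJS hp0 hq0).tendsto α₀
    rw [skewGeomJS_eq hp0 hq0, hα₀, zero_mul] at h
    exact tendsto_nhdsWithin_of_tendsto_nhds h
  exact ⟨tendsto_of_root 0 (by ring), tendsto_of_root 1 (by ring)⟩

theorem jsg_alpha_original_tendsto_zero
    {X : Type*} [MeasurableSpace X] (μ : Measure X)
    (p q : X → ℝ) (hp : Measurable p) (hq : Measurable q)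
    (hp0 : ∀ᵐ x ∂μ, 0 < p x) (hq0 : ∀ᵐ x ∂μ, 0 < q x)
    (hpq : Integrable (fun x => p x * Real.log (p x / q x)) μ)
    (hqp : Integrable (fun x => q x * Real.log (q x / p x)) μ) :
    Tendsto (fun α : ℝ =>
        (1 - α) * ∫ x, p x * Real.log (p x / (p x ^ (1 - α) * q x ^ α)) ∂μ
          + α * ∫ x, q x * Real.log (q x / (p x ^ (1 - α) * q x ^ α)) ∂μ)
      (𝓝[Set.Ioo (0 : ℝ) 1] 0) (𝓝 0) ∧
    Tendsto (fun α : ℝ =>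
        (1 - α) * ∫ x, p x * Real.log (p x / (p x ^ (1 - α) * q x ^ α)) ∂μ
          + α * ∫ x, q x * Real.log (q x / (p x ^ (1 - α) * q x ^ α)) ∂μ)
      (𝓝[Set.Ioo (0 : ℝ) 1] 1) (𝓝 0) :=
  jsg_alpha_original_tendsto_zero_general μ p q hp0 hq0
end
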